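/- arXiv:2305.12688 — 2 statements merged into one kernel-verified Lean document; each statement's English description precedes it below -/
import Mathlib

section
/- Let G be a simple graph on a finite vertex set V with |V| ≥ 4, and let [G] be its binding graph. Then the automorphism group of [G] is isomorphic, as a group, to the automorphism group of G. -/
/-
Basic vertices of `[G]` have degree at least `|V| - 1 ≥ 3`, binding vertices have degree `2`, so
every automorphism of `[G]` maps basic vertices to basic ones and restricts to an automorphism
of `G`. A binding vertex is determined by its two neighbours, so an automorphism of `[G]` is
determined by that restriction; conversely every automorphism of `G` extends to `[G]` by acting
on pairs.
-/

namespace Binding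

/-- The diamond product of a labeling: the multiset of 2-d-walk label pairs. -/
def diamond {V L : Type*} [Fintype V] (X : V → V → L) : V → V → Multiset (L × L) :=
  fun u v => Finset.univ.val.map fun k => (X u k, X k v)

/-- A labeling recognizes vertices if diagonal labels never coincide with
off-diagonal labels. -/
def RecognizesVertices {V L : Type*} (X : V → V → L) : Prop :=
  ∀ i u v : V, u ≠ v → X i i ≠ X u v

/-- `Y` refines `X` if equal `Y`-labels imply equal `X`-labels. -/
def Refines {V L L' : Type*} (Y : V → V → L') (X : V → V → L) : Prop :=
  ∀ u v r s : V, Y u v = Y r s → X u v = X r s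

/-- A labeling is stable if labels agree exactly when their diamond products agree. -/
def Stable {V L : Type*} [Fintype V] (X : V → V → L) : Prop :=
  ∀ u v r s : V, X u v = X r s ↔ diamond X u v = diamond X r s

/-- The type of unordered pairs of distinct vertices of `V`. -/
abbrev Pairs (V : Type*) : Type _ := {s : Finset V // s.card = 2}

/-- The binding graph of a simple graph `G`: each pair of distinct basic
vertices gets a fresh binding vertex adjacent exactly to the two of them. -/
def bindingGraph {V : Type*} (G : SimpleGraph V) : SimpleGraph (V ⊕ Pairs V) where
  Adj a b :=
    match a, b with
    | Sum.inl u, Sum.inl v => G.Adj u v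
    | Sum.inl u, Sum.inr p => u ∈ p.val
    | Sum.inr p, Sum.inl u => u ∈ p.val
    | Sum.inr _, Sum.inr _ => False
  symm := ⟨by
    rintro (u | p) (v | q) h
    · exact G.adj_symm h
    · exact h
    · exact h
    · exact h⟩
  loopless := ⟨by
    rintro (u | p) h
    · exact G.irrefl h
    · exact h⟩

section Congr

variable {V W : Type*} {G : SimpleGraph V} {H : SimpleGraph W}

def pairsCongr (e : V ≃ W) : Pairs V ≃ Pairs W :=
  e.finsetCongr.subtypeEquiv fun s => by simp

def bindingGraphCongr (f : G ≃g H) : bindingGraph G ≃g bindingGraph H where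
  toEquiv := f.toEquiv.sumCongr (pairsCongr f.toEquiv)
  map_rel_iff' := by
    rintro (u | p) (v | q)
    · exact f.map_adj_iff
    · exact Finset.mem_map' _
    · exact Finset.mem_map' _
    · exact Iff.rfl

lemma bindingGraphCongr_trans {X : Type*} {K : SimpleGraph X} (f : G ≃g H) (g : H ≃g K) :
    bindingGraphCongr (f.trans g) = (bindingGraphCongr f).trans (bindingGraphCongr g) := by
  ext (u | p)
  · rfl
  · exact congrArg Sum.inr <| Subtype.ext <|
      (Finset.map_map f.toEquiv.toEmbedding g.toEquiv.toEmbedding p.1).symm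

variable (G) in
def bindingGraphCongrHom : (G ≃g G) →* (bindingGraph G ≃g bindingGraph G) where
  toFun := bindingGraphCongr
  map_one' := by
    ext (u | p)
    · rfl
    · exact congrArg Sum.inr (Subtype.ext Finset.map_refl)
  map_mul' f g := bindingGraphCongr_trans g f

lemma bindingGraphCongrHom_injective (G : SimpleGraph V) :
    Function.Injective (bindingGraphCongrHom G) := fun f g hfg => by
  ext u
  exact Sum.inl_injective (congrArg (· (Sum.inl u)) hfg)

end Congr

section Degree

variable {V : Type*} (G : SimpleGraph V)

lemma neighborSet_inr (p : Pairs V) :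
    (bindingGraph G).neighborSet (Sum.inr p) = Sum.inl '' p.1 := by
  ext (u | q) <;> simp [bindingGraph]

lemma natCard_neighborSet_inr (p : Pairs V) :
    Nat.card ((bindingGraph G).neighborSet (Sum.inr p)) = 2 := by
  rw [neighborSet_inr, Nat.card_image_of_injective Sum.inl_injective, Nat.card_coe_set_eq,
    Set.ncard_coe_finset, p.2]

lemma card_sub_one_le_natCard_neighborSet_inl [Fintype V] (u : V) :
    Fintype.card V - 1 ≤ Nat.card ((bindingGraph G).neighborSet (Sum.inl u)) := by
  classical
  let pairWith (v : {v // v ≠ u}) : (bindingGraph G).neighborSet (Sum.inl u) :=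
    ⟨Sum.inr ⟨{u, v.1}, Finset.card_pair v.2.symm⟩, Finset.mem_insert_self u {v.1}⟩
  have pairWith_injective : Function.Injective pairWith := by
    rintro ⟨v, hv⟩ ⟨w, hw⟩ h
    have hpair : ({u, v} : Finset V) = {u, w} :=
      congrArg Subtype.val (Sum.inr_injective (congrArg Subtype.val h))
    have hv_mem : v ∈ ({u, w} : Finset V) :=
      hpair ▸ Finset.mem_insert_of_mem (Finset.mem_singleton_self v)
    simpa [hv] using hv_mem
  calc Fintype.card V - 1 = Nat.card {v // v ≠ u} := by simp [Fintype.card_subtype_compl]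
    _ ≤ _ := Nat.card_le_card_of_injective _ pairWith_injective

end Degree

section Rigidity

variable {V : Type*} [Fintype V] {G : SimpleGraph V} (hcard : 4 ≤ Fintype.card V)
include hcard

variable (G) in
lemma natCard_neighborSet_inl_ne_inr (u : V) (p : Pairs V) :
    Nat.card ((bindingGraph G).neighborSet (Sum.inl u)) ≠
      Nat.card ((bindingGraph G).neighborSet (Sum.inr p)) := by
  have := card_sub_one_le_natCard_neighborSet_inl G u
  rw [natCard_neighborSet_inr]
  omega

lemma exists_apply_inl_eq_inl (a : bindingGraph G ≃g bindingGraph G) (u : V) :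
    ∃ v, a (Sum.inl u) = Sum.inl v := by
  rcases h : a (Sum.inl u) with v | p
  · exact ⟨v, rfl⟩
  · refine absurd ?_ (natCard_neighborSet_inl_ne_inr G hcard u p)
    rw [← h]
    exact Nat.card_congr (a.mapNeighborSet _)

lemma exists_apply_inr_eq_inr (a : bindingGraph G ≃g bindingGraph G) (p : Pairs V) :
    ∃ q, a (Sum.inr p) = Sum.inr q := by
  rcases h : a (Sum.inr p) with v | q
  · obtain ⟨w, hw⟩ := exists_apply_inl_eq_inl hcard a.symm v
    rw [← h, RelIso.symm_apply_apply] at hw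
    exact absurd hw Sum.inr_ne_inl
  · exact ⟨q, rfl⟩

lemma exists_iso_apply_inl (a : bindingGraph G ≃g bindingGraph G) :
    ∃ f : G ≃g G, ∀ u, a (Sum.inl u) = Sum.inl (f u) := by
  choose f hf using exists_apply_inl_eq_inl hcard a
  choose g hg using exists_apply_inl_eq_inl hcard a.symm
  have left_inv u : g (f u) = u := Sum.inl_injective <| by
    rw [← hg, ← hf, RelIso.symm_apply_apply]
  have right_inv u : f (g u) = u := Sum.inl_injective <| by
    rw [← hf, ← hg, RelIso.apply_symm_apply]
  refine ⟨⟨⟨f, g, left_inv, right_inv⟩, fun {u v} => ?_⟩, hf⟩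
  have := a.map_adj_iff (v := Sum.inl u) (w := Sum.inl v)
  rwa [hf, hf] at this

lemma ext_of_apply_inl {a b : bindingGraph G ≃g bindingGraph G}
    (h : ∀ u, a (Sum.inl u) = b (Sum.inl u)) : a = b := by
  ext (u | p)
  · exact h u
  obtain ⟨q, hq⟩ := exists_apply_inr_eq_inr hcard a p
  obtain ⟨r, hr⟩ := exists_apply_inr_eq_inr hcard b p
  have key : (bindingGraph G).neighborSet (a (Sum.inr p)) =
      (bindingGraph G).neighborSet (b (Sum.inr p)) := by
    rw [← a.image_neighborSet, ← b.image_neighborSet, neighborSet_inr, Set.image_image,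
      Set.image_image]
    exact Set.image_congr fun u _ => h u
  rw [hq, hr, neighborSet_inr, neighborSet_inr,
    (Set.image_injective.mpr Sum.inl_injective).eq_iff, Finset.coe_inj] at key
  rw [hq, hr, Subtype.ext key]

lemma bindingGraphCongrHom_surjective : Function.Surjective (bindingGraphCongrHom G) := by
  intro a
  obtain ⟨f, hf⟩ := exists_iso_apply_inl hcard a
  exact ⟨f, ext_of_apply_inl hcard fun u => (hf u).symm⟩

end Rigidity

theorem aut_bindingGraph_iso_aut_general
    {V : Type*} [Fintype V] (G : SimpleGraph V)
    (hcard : 4 ≤ Fintype.card V) :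
    ∃ e : (bindingGraph G ≃g bindingGraph G) ≃ (G ≃g G),
      ∀ a b : bindingGraph G ≃g bindingGraph G,
        e (a.trans b) = (e a).trans (e b) := by
  let e := MulEquiv.ofBijective (bindingGraphCongrHom G)
    ⟨bindingGraphCongrHom_injective G, bindingGraphCongrHom_surjective hcard⟩
  -- in the automorphism group, `a * b = b.trans a`
  exact ⟨e.symm.toEquiv, fun a b => map_mul e.symm b a⟩

/-- the automorphism group of the binding graph is isomorphic,
as a group (i.e. by a composition-preserving bijection), to the automorphism
group of the basic graph. -/
theorem aut_bindingGraph_iso_aut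
    {V : Type*} [Fintype V] [DecidableEq V] (G : SimpleGraph V)
    (hcard : 4 ≤ Fintype.card V) :
    ∃ e : (bindingGraph G ≃g bindingGraph G) ≃ (G ≃g G),
      ∀ a b : bindingGraph G ≃g bindingGraph G,
        e (a.trans b) = (e a).trans (e b) :=
  aut_bindingGraph_iso_aut_general G hcard

end Binding
end

section
/- Let G be a simple graph on a finite vertex set V, let [G] be its binding graph on W = V ⊕ P, and let M be any stable vertex-recognizing refinement of [G]. Let u, v, r, s ∈ V with u ≠ v and r ≠ s, and let p = inr{u,v} and q = inr{r,s} be the corresponding binding vertices. Then: (1) if u,v are adjacent in G and r,s are not adjacent in G, the sets of labels {M(p, inl u), M(inl u, p), M(p, inl v), M(inl v, p)} and {M(q, inl r), M(inl r, q), M(q, inl s), M(inl s, q)} are disjoint; (2) if |V| > 2 and u,v are adjacent in G, then M(inl u, inl v) ∉ {M(q, inl r), M(inl r, q), M(q, inl s), M(inl s, q)}. In particular, M recognizes the basic and binding edges of [G]. -/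
/-!
In a stable vertex-recognizing refinement a label determines adjacency, hence (by stability) also
whether its two ends have a common neighbour, and the degrees of both ends. A binding edge over an
edge `uv` of `G` lies on the triangle `u, v, {u, v}`, whereas a binding edge over a non-edge has no
common neighbour. A binding edge has an end of degree `2`, whereas both ends of a basic edge have
degree `deg_G + |V| - 1 ≥ 3` once `|V| > 2`.
-/
namespace Binding

/-- A labeling is a stable vertex-recognizing refinement of a simple graph if it
is stable, recognizes vertices, and equal off-diagonal labels agree on
adjacency. -/
def IsSVRRefinement {W L : Type*} [Fintype W] (H : SimpleGraph W) (M : W → W → L) : Prop :=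
  Stable M ∧ RecognizesVertices M ∧
    ∀ u v r s : W, u ≠ v → r ≠ s → M u v = M r s → (H.Adj u v ↔ H.Adj r s)

open Finset SimpleGraph

theorem mem_diamond {W L : Type*} [Fintype W] {X : W → W → L} {x y : W} {a b : L} :
    (a, b) ∈ diamond X x y ↔ ∃ k, X x k = a ∧ X k y = b := by
  simp [diamond]

theorem countP_diamond_fst {W L : Type*} [Fintype W] (X : W → W → L) (P : L → Prop)
    [DecidablePred P] (x y : W) :
    (diamond X x y).countP (fun e => P e.1) = #{k | P (X x k)} := by
  rw [diamond, Multiset.countP_map, Finset.card_def, Finset.filter_val]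

theorem countP_diamond_snd {W L : Type*} [Fintype W] (X : W → W → L) (P : L → Prop)
    [DecidablePred P] (x y : W) :
    (diamond X x y).countP (fun e => P e.2) = #{k | P (X k y)} := by
  rw [diamond, Multiset.countP_map, Finset.card_def, Finset.filter_val]

namespace IsSVRRefinement

variable {W L : Type*} [Fintype W] {H : SimpleGraph W} {M : W → W → L}

theorem adj_iff_of_label_eq (hM : IsSVRRefinement H M) {a b x y : W} (h : M a b = M x y) :
    H.Adj a b ↔ H.Adj x y := by
  obtain ⟨-, hrec, hadj⟩ := hM
  by_cases hab : a = b
  · subst hab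
    obtain rfl : x = y := by_contra fun hxy => hrec a x y hxy h
    simp
  · by_cases hxy : x = y
    · subst hxy
      exact absurd h.symm (hrec x a b hab)
    · exact hadj a b x y hab hxy h

theorem adj_iff_exists_label_eq (hM : IsSVRRefinement H M) {x y : W} :
    H.Adj x y ↔ ∃ a b, H.Adj a b ∧ M a b = M x y :=
  ⟨fun h => ⟨x, y, h, rfl⟩, fun ⟨_, _, hab, h⟩ => (hM.adj_iff_of_label_eq h).1 hab⟩

theorem commonNeighbors_nonempty_of_label_eq (hM : IsSVRRefinement H M) {x y x' y' : W}
    (h : M x y = M x' y') (hxy : (H.commonNeighbors x y).Nonempty) :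
    (H.commonNeighbors x' y').Nonempty := by
  obtain ⟨k, hk⟩ := hxy
  rw [mem_commonNeighbors] at hk
  have hmem : (M x k, M k y) ∈ diamond M x' y' :=
    (hM.1 x y x' y').1 h ▸ mem_diamond.2 ⟨k, rfl, rfl⟩
  obtain ⟨k', hxk', hk'y⟩ := mem_diamond.1 hmem
  exact ⟨k', H.mem_commonNeighbors.2
    ⟨(hM.adj_iff_of_label_eq hxk').2 hk.1, ((hM.adj_iff_of_label_eq hk'y).2 hk.2.symm).symm⟩⟩

/-- Since a label determines adjacency, the diamond of `(x, y)` counts the neighbours of `x` among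
its first labels and those of `y` among its second labels. -/
theorem degree_eq_of_label_eq [DecidableRel H.Adj] (hM : IsSVRRefinement H M) {x y x' y' : W}
    (h : M x y = M x' y') : H.degree x = H.degree x' ∧ H.degree y = H.degree y' := by
  classical
  let IsEdgeLabel : L → Prop := fun ℓ => ∃ a b, H.Adj a b ∧ M a b = ℓ
  have hfst (x y : W) : H.degree x = (diamond M x y).countP (fun e => IsEdgeLabel e.1) := by
    rw [countP_diamond_fst M IsEdgeLabel, ← card_neighborFinset_eq_degree, neighborFinset_eq_filter]
    exact congrArg _ (filter_congr fun k _ => hM.adj_iff_exists_label_eq)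
  have hsnd (x y : W) : H.degree y = (diamond M x y).countP (fun e => IsEdgeLabel e.2) := by
    rw [countP_diamond_snd M IsEdgeLabel, ← card_neighborFinset_eq_degree, neighborFinset_eq_filter]
    exact congrArg _ (filter_congr fun k _ => (H.adj_comm y k).trans hM.adj_iff_exists_label_eq)
  have hdiamond := (hM.1 x y x' y').1 h
  exact ⟨by rw [hfst x y, hfst x' y', hdiamond], by rw [hsnd x y, hsnd x' y', hdiamond]⟩

end IsSVRRefinement

section BindingGraph

variable {V : Type*} {G : SimpleGraph V}

@[simp]
theorem bindingGraph_adj_inl_inl {u v : V} :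
    (bindingGraph G).Adj (Sum.inl u) (Sum.inl v) ↔ G.Adj u v := Iff.rfl

@[simp]
theorem bindingGraph_adj_inl_inr {u : V} {p : Pairs V} :
    (bindingGraph G).Adj (Sum.inl u) (Sum.inr p) ↔ u ∈ p.val := Iff.rfl

@[simp]
theorem bindingGraph_adj_inr_inl {u : V} {p : Pairs V} :
    (bindingGraph G).Adj (Sum.inr p) (Sum.inl u) ↔ u ∈ p.val := Iff.rfl

@[simp]
theorem bindingGraph_not_adj_inr_inr {p q : Pairs V} :
    ¬ (bindingGraph G).Adj (Sum.inr p) (Sum.inr q) := id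

theorem card_filter_mem_pairs [Fintype V] [DecidableEq V] (x : V) :
    #{p : Pairs V | x ∈ p.val} = Fintype.card V - 1 := by
  rw [← card_univ, ← card_erase_of_mem (mem_univ x)]
  symm
  refine card_bij (fun w hw => ⟨{x, w}, card_pair (ne_of_mem_erase hw).symm⟩)
    (fun w _ => by simp) (fun w₁ hw₁ w₂ _ h => ?_) (fun p hp => ?_)
  · have hw : w₁ ∈ ({x, w₂} : Finset V) := by
      rw [← show ({x, w₁} : Finset V) = {x, w₂} from congrArg Subtype.val h]
      simp
    simpa [ne_of_mem_erase hw₁] using hw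
  · obtain ⟨a, b, hab, hp'⟩ := card_eq_two.1 p.2
    have hx : x ∈ p.val := (mem_filter.1 hp).2
    rw [hp', mem_insert, mem_singleton] at hx
    rcases hx with rfl | rfl
    · exact ⟨b, by simp [hab.symm], Subtype.ext hp'.symm⟩
    · exact ⟨a, by simp [hab], Subtype.ext (hp'.trans (pair_comm _ _)).symm⟩

theorem bindingGraph_degree_inl [Fintype V] [DecidableEq V] [DecidableRel G.Adj]
    [DecidableRel (bindingGraph G).Adj] (x : V) :
    (bindingGraph G).degree (Sum.inl x) = G.degree x + (Fintype.card V - 1) := by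
  have hnbr : (bindingGraph G).neighborFinset (Sum.inl x) =
      (G.neighborFinset x).disjSum {p : Pairs V | x ∈ p.val} := by
    ext (w | p) <;> simp
  rw [← card_neighborFinset_eq_degree, hnbr, card_disjSum, card_neighborFinset_eq_degree,
    card_filter_mem_pairs]

theorem bindingGraph_degree_inr [Fintype V] [DecidableRel (bindingGraph G).Adj] (p : Pairs V) :
    (bindingGraph G).degree (Sum.inr p) = 2 := by
  have hnbr : (bindingGraph G).neighborFinset (Sum.inr p) = p.val.map Function.Embedding.inl := by
    ext (w | q) <;> simp
  rw [← card_neighborFinset_eq_degree, hnbr, card_map, p.2]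

theorem bindingGraph_commonNeighbors_inr_inl_nonempty_iff [DecidableEq V] {u v z : V}
    (huv : u ≠ v) (hz : z = u ∨ z = v) :
    ((bindingGraph G).commonNeighbors (Sum.inr ⟨{u, v}, card_pair huv⟩) (Sum.inl z)).Nonempty ↔
      G.Adj u v := by
  constructor
  · rintro ⟨w | q, hw⟩ <;> rw [mem_commonNeighbors] at hw
    · simp only [bindingGraph_adj_inr_inl, mem_insert, mem_singleton,
        bindingGraph_adj_inl_inl] at hw
      obtain ⟨rfl | rfl, hzw⟩ := hw <;> rcases hz with rfl | rfl
      exacts [absurd rfl hzw.ne, hzw.symm, hzw, absurd rfl hzw.ne]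
    · exact absurd hw.1 bindingGraph_not_adj_inr_inr
  · intro h
    rcases hz with rfl | rfl
    · exact ⟨Sum.inl v, (bindingGraph G).mem_commonNeighbors.2 ⟨by simp, h⟩⟩
    · exact ⟨Sum.inl u, (bindingGraph G).mem_commonNeighbors.2 ⟨by simp, h.symm⟩⟩

variable {L : Type*} [DecidableEq V]

def bindingEdgeLabels (M : (V ⊕ Pairs V) → (V ⊕ Pairs V) → L) {u v : V} (huv : u ≠ v) :
    Set L :=
  {M (Sum.inr ⟨{u, v}, card_pair huv⟩) (Sum.inl u),
    M (Sum.inl u) (Sum.inr ⟨{u, v}, card_pair huv⟩),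
    M (Sum.inr ⟨{u, v}, card_pair huv⟩) (Sum.inl v),
    M (Sum.inl v) (Sum.inr ⟨{u, v}, card_pair huv⟩)}

theorem exists_label_eq_of_mem_bindingEdgeLabels {M : (V ⊕ Pairs V) → (V ⊕ Pairs V) → L}
    {u v : V} (huv : u ≠ v) {P : V ⊕ Pairs V → V ⊕ Pairs V → Prop}
    (hP : ∀ z, z = u ∨ z = v →
      P (Sum.inr ⟨{u, v}, card_pair huv⟩) (Sum.inl z) ∧
        P (Sum.inl z) (Sum.inr ⟨{u, v}, card_pair huv⟩))
    {ℓ : L} (hℓ : ℓ ∈ bindingEdgeLabels M huv) : ∃ x y, M x y = ℓ ∧ P x y := by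
  rcases hℓ with rfl | rfl | rfl | rfl
  exacts [⟨_, _, rfl, (hP u (.inl rfl)).1⟩, ⟨_, _, rfl, (hP u (.inl rfl)).2⟩,
    ⟨_, _, rfl, (hP v (.inr rfl)).1⟩, ⟨_, _, rfl, (hP v (.inr rfl)).2⟩]

theorem exists_label_eq_commonNeighbors_nonempty_iff {M : (V ⊕ Pairs V) → (V ⊕ Pairs V) → L}
    {u v : V} (huv : u ≠ v) {ℓ : L} (hℓ : ℓ ∈ bindingEdgeLabels M huv) :
    ∃ x y, M x y = ℓ ∧ (((bindingGraph G).commonNeighbors x y).Nonempty ↔ G.Adj u v) :=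
  exists_label_eq_of_mem_bindingEdgeLabels huv
    (fun _ hz => ⟨bindingGraph_commonNeighbors_inr_inl_nonempty_iff huv hz,
      commonNeighbors_symm _ _ _ ▸ bindingGraph_commonNeighbors_inr_inl_nonempty_iff huv hz⟩) hℓ

theorem exists_label_eq_degree_eq_two [Fintype V] [DecidableRel (bindingGraph G).Adj]
    {M : (V ⊕ Pairs V) → (V ⊕ Pairs V) → L} {u v : V} (huv : u ≠ v) {ℓ : L}
    (hℓ : ℓ ∈ bindingEdgeLabels M huv) :
    ∃ x y, M x y = ℓ ∧ ((bindingGraph G).degree x = 2 ∨ (bindingGraph G).degree y = 2) :=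
  exists_label_eq_of_mem_bindingEdgeLabels huv
    (fun _ _ => ⟨.inl (bindingGraph_degree_inr _), .inr (bindingGraph_degree_inr _)⟩) hℓ

end BindingGraph

/-- a stable vertex-recognizing refinement of a binding graph
recognizes basic and binding edges: (1) labels of binding edges over an edge of
`G` are disjoint from labels of binding edges over a non-edge; (2) for `|V| > 2`,
labels of basic edges never coincide with labels of binding edges. -/
theorem recognizes_basic_and_binding_edges
    {V L : Type*} [Fintype V] [DecidableEq V] (G : SimpleGraph V)
    (M : (V ⊕ Pairs V) → (V ⊕ Pairs V) → L)
    (hM : IsSVRRefinement (bindingGraph G) M)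
    (u v r s : V) (huv : u ≠ v) (hrs : r ≠ s) :
    (G.Adj u v → ¬ G.Adj r s →
      Disjoint
        ({M (Sum.inr ⟨{u, v}, Finset.card_pair huv⟩) (Sum.inl u),
          M (Sum.inl u) (Sum.inr ⟨{u, v}, Finset.card_pair huv⟩),
          M (Sum.inr ⟨{u, v}, Finset.card_pair huv⟩) (Sum.inl v),
          M (Sum.inl v) (Sum.inr ⟨{u, v}, Finset.card_pair huv⟩)} : Set L)
        ({M (Sum.inr ⟨{r, s}, Finset.card_pair hrs⟩) (Sum.inl r),
          M (Sum.inl r) (Sum.inr ⟨{r, s}, Finset.card_pair hrs⟩),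
          M (Sum.inr ⟨{r, s}, Finset.card_pair hrs⟩) (Sum.inl s),
          M (Sum.inl s) (Sum.inr ⟨{r, s}, Finset.card_pair hrs⟩)} : Set L)) ∧
    (2 < Fintype.card V → G.Adj u v →
      M (Sum.inl u) (Sum.inl v) ∉
        ({M (Sum.inr ⟨{r, s}, Finset.card_pair hrs⟩) (Sum.inl r),
          M (Sum.inl r) (Sum.inr ⟨{r, s}, Finset.card_pair hrs⟩),
          M (Sum.inr ⟨{r, s}, Finset.card_pair hrs⟩) (Sum.inl s),
          M (Sum.inl s) (Sum.inr ⟨{r, s}, Finset.card_pair hrs⟩)} : Set L)) := by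
  classical
  refine ⟨fun hGuv hGrs => Set.disjoint_left.2 fun ℓ hℓuv hℓrs => ?_, fun hV hGuv hℓ => ?_⟩
  · obtain ⟨x, y, rfl, hxy⟩ := exists_label_eq_commonNeighbors_nonempty_iff (G := G) huv hℓuv
    obtain ⟨x', y', hlabel, hx'y'⟩ := exists_label_eq_commonNeighbors_nonempty_iff (G := G) hrs hℓrs
    exact hGrs (hx'y'.1 (hM.commonNeighbors_nonempty_of_label_eq hlabel.symm (hxy.2 hGuv)))
  · obtain ⟨x, y, hlabel, hdeg⟩ := exists_label_eq_degree_eq_two (G := G) hrs hℓ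
    obtain ⟨hu, hv⟩ := hM.degree_eq_of_label_eq hlabel
    rw [bindingGraph_degree_inl] at hu hv
    have hdu := (G.degree_pos_iff_exists_adj u).2 ⟨v, hGuv⟩
    have hdv := (G.degree_pos_iff_exists_adj v).2 ⟨u, hGuv.symm⟩
    omega

end Binding
end
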